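/- Let σ = conv{σ_0,...,σ_k} and τ = conv{τ_0,...,τ_ℓ} be affine simplices in ℝ^m of complementary dimensions k + ℓ = m with all vertices in general position, intersecting at a point p = φ_σ(α) = φ_τ(β), where φ_σ(u) = σ_0 + Σ u_i(σ_i − σ_0) and φ_τ(v) = τ_0 + Σ v_j(τ_j − τ_0). Then sgn det((1,p),(1,σ_1),...,(1,σ_k),(1,τ_1),...,(1,τ_ℓ)) = sgn det(σ_1−σ_0, ..., σ_k−σ_0, τ_1−τ_0, ..., τ_ℓ−τ_0), i.e., the combinatorial intersection number equals the differential-geometric index of intersection of the parametrizations. -/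

import Mathlib

/-!
Subtracting the column `(1, p)` from the others turns the combinatorial determinant into
`det(σ_i - p, τ_j - p)`. Since `p = σ_0 + ∑ α_c (σ_c - σ_0)`, each `σ_i - p` is the edge vector
`σ_i - σ_0` minus the fixed combination `∑ α_c (σ_c - σ_0)`, and likewise for `τ`. Hence that
matrix is the differential one times a block-diagonal matrix with blocks `1 - 𝟙 αᵀ` and `1 - 𝟙 βᵀ`,
whose determinant `(1 - ∑ α)(1 - ∑ β)` is positive.
-/

open Matrix

lemma Real.sign_mul_of_pos (x : ℝ) {c : ℝ} (hc : 0 < c) : Real.sign (x * c) = Real.sign x := by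
  rcases lt_trichotomy x 0 with h | rfl | h
  · rw [Real.sign_of_neg h, Real.sign_of_neg (mul_neg_of_neg_of_pos h hc)]
  · simp
  · rw [Real.sign_of_pos h, Real.sign_of_pos (mul_pos h hc)]

namespace Matrix

variable {R : Type*} [CommRing R]

lemma det_one_sub_replicateRow {n : Type*} [Fintype n] [DecidableEq n] (a : n → R) :
    det (1 - replicateRow n a) = 1 - ∑ c, a c := by
  have hrank_one : -replicateRow n a = replicateCol Unit (1 : n → R) * replicateRow Unit (-a) := by
    ext; simp [mul_apply]
  rw [sub_eq_add_neg, hrank_one, det_one_add_replicateCol_mul_replicateRow]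
  simp [dotProduct, sub_eq_add_neg]

lemma det_of_cons_one_cons {n : ℕ} (p : Fin n → R) (v : Fin n → Fin n → R) :
    det (of (Fin.cons (Fin.cons 1 p) fun c => Fin.cons 1 (v c))) = det (of fun c => v c - p) := by
  rw [det_eq_of_forall_row_eq_smul_add_const (Fin.cons 0 fun _ => 1) 0 rfl
    (B := of (Fin.cons (Fin.cons 1 p) fun c => Fin.cons 0 (v c - p)))]
  · rw [det_succ_column_zero, Fin.sum_univ_succ]
    simp [submatrix]
    rfl
  · intro i j
    cases i using Fin.cases <;> cases j using Fin.cases <;> simp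

lemma det_of_sub_weightedSum_blockwise {ι κ n : Type*} [Fintype ι] [Fintype κ] [Fintype n]
    [DecidableEq ι] [DecidableEq κ] [DecidableEq n] (e : ι ⊕ κ ≃ n)
    (x : ι → n → R) (y : κ → n → R) (a : ι → R) (b : κ → R) :
    det (of fun s => Sum.elim (fun i => x i - ∑ c, a c • x c) (fun j => y j - ∑ d, b d • y d)
      (e.symm s)) = (1 - ∑ c, a c) * (1 - ∑ d, b d) * det (of fun s => Sum.elim x y (e.symm s)) := by
  let W : Matrix (ι ⊕ κ) (ι ⊕ κ) R :=
    fromBlocks (1 - replicateRow ι a) 0 0 (1 - replicateRow κ b)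
  have hW : det W = (1 - ∑ c, a c) * (1 - ∑ d, b d) := by
    rw [det_fromBlocks_zero₁₂, det_one_sub_replicateRow, det_one_sub_replicateRow]
  rw [← det_submatrix_equiv_self e, ← det_submatrix_equiv_self e (of _), ← hW, ← det_mul]
  congr 1
  ext (i | j) t <;>
    simp [W, mul_apply, Fintype.sum_sum_type, sub_mul, one_apply, Finset.sum_sub_distrib]

end Matrix

section IntersectionNumber

variable {k l : ℕ} (σv : Fin (k + 1) → Fin (k + l) → ℝ) (τv : Fin (l + 1) → Fin (k + l) → ℝ)

def combinatorialMatrix (p : Fin (k + l) → ℝ) : Matrix (Fin (k + l + 1)) (Fin (k + l + 1)) ℝ :=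
  of fun i j =>
    (if (j : ℕ) = 0 then Fin.cons (1 : ℝ) p
     else if hj : (j : ℕ) < k + 1 then Fin.cons (1 : ℝ) (σv ⟨(j : ℕ), hj⟩)
     else Fin.cons (1 : ℝ) (τv ⟨(j : ℕ) - k, by have := j.isLt; omega⟩) :
       Fin (k + l + 1) → ℝ) i

def differentialMatrix : Matrix (Fin (k + l)) (Fin (k + l)) ℝ :=
  of fun i j =>
    (if hj : (j : ℕ) < k then σv (⟨(j : ℕ), hj⟩ : Fin k).succ - σv 0
     else τv (⟨(j : ℕ) - k, by have := j.isLt; omega⟩ : Fin l).succ - τv 0 :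
       Fin (k + l) → ℝ) i

lemma combinatorialMatrix_transpose (p : Fin (k + l) → ℝ) :
    (combinatorialMatrix σv τv p)ᵀ = of (Fin.cons (Fin.cons 1 p) fun c =>
      Fin.cons 1 (Sum.elim (fun i => σv i.succ) (fun j => τv j.succ) (finSumFinEquiv.symm c))) := by
  ext j r
  induction j using Fin.cases with
  | zero => simp [combinatorialMatrix]
  | succ c =>
    induction c using Fin.addCases with
    | left i => simp [combinatorialMatrix]; rfl
    | right j => simp [combinatorialMatrix]; congr 2; ext; simp; omega

lemma differentialMatrix_transpose :
    (differentialMatrix σv τv)ᵀ = of fun c =>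
      Sum.elim (fun i => σv i.succ - σv 0) (fun j => τv j.succ - τv 0) (finSumFinEquiv.symm c) := by
  ext c r
  induction c using Fin.addCases with
  | left i => simp [differentialMatrix, Fin.succ]
  | right j => simp [differentialMatrix, Fin.succ]

lemma det_combinatorialMatrix {a : Fin k → ℝ} {b : Fin l → ℝ} {p : Fin (k + l) → ℝ}
    (hσ : p = σv 0 + ∑ i, a i • (σv i.succ - σv 0))
    (hτ : p = τv 0 + ∑ j, b j • (τv j.succ - τv 0)) :
    det (combinatorialMatrix σv τv p) =
      (1 - ∑ i, a i) * (1 - ∑ j, b j) * det (differentialMatrix σv τv) := by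
  rw [← det_transpose, combinatorialMatrix_transpose, det_of_cons_one_cons,
    ← det_transpose (differentialMatrix σv τv), differentialMatrix_transpose,
    ← det_of_sub_weightedSum_blockwise]
  congr 2
  funext c
  induction c using Fin.addCases with
  | left i => simp only [finSumFinEquiv_symm_apply_castAdd, Sum.elim_inl, hσ]; abel
  | right j => simp only [finSumFinEquiv_symm_apply_natAdd, Sum.elim_inr, hτ]; abel

end IntersectionNumber

/-- If two simplices `σ`, `τ` of complementary dimensions `k + ℓ = m` intersect
at a point `p = φ_σ(α) = φ_τ(β)` given by parameters `α`, `β` in the (interior of the)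
standard simplices, then the sign of the combinatorial determinant
`det((1,p),(1,σ_1),…,(1,σ_k),(1,τ_1),…,(1,τ_ℓ))` equals the sign of the differential-geometric
determinant `det(σ_1−σ_0,…,σ_k−σ_0,τ_1−τ_0,…,τ_ℓ−τ_0)`. -/
theorem stmt12 (m k l : ℕ) (hkl : k + l = m)
    (σv : Fin (k + 1) → Fin m → ℝ) (τv : Fin (l + 1) → Fin m → ℝ)
    (a : Fin k → ℝ) (b : Fin l → ℝ)
    (ha1 : ∑ i, a i < 1)
    (hb1 : ∑ j, b j < 1)
    (p : Fin m → ℝ)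
    (hp1 : p = σv 0 + ∑ i : Fin k, a i • (σv i.succ - σv 0))
    (hp2 : p = τv 0 + ∑ j : Fin l, b j • (τv j.succ - τv 0)) :
    Real.sign (Matrix.det (Matrix.of fun (i j : Fin (m + 1)) =>
      (if (j : ℕ) = 0 then Fin.cons (1 : ℝ) p
       else if hj : (j : ℕ) < k + 1 then Fin.cons (1 : ℝ) (σv ⟨(j : ℕ), hj⟩)
       else Fin.cons (1 : ℝ) (τv ⟨(j : ℕ) - k, by have := j.isLt; omega⟩) :
         Fin (m + 1) → ℝ) i))
    = Real.sign (Matrix.det (Matrix.of fun (i j : Fin m) =>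
      (if hj : (j : ℕ) < k then σv (⟨(j : ℕ), hj⟩ : Fin k).succ - σv 0
       else τv (⟨(j : ℕ) - k, by have := j.isLt; omega⟩ : Fin l).succ - τv 0 :
         Fin m → ℝ) i)) := by
  subst hkl
  change Real.sign (det (combinatorialMatrix σv τv p)) = Real.sign (det (differentialMatrix σv τv))
  rw [det_combinatorialMatrix σv τv hp1 hp2, mul_comm]
  exact Real.sign_mul_of_pos _ (mul_pos (sub_pos.2 ha1) (sub_pos.2 hb1))
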